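/- In the ICW model, each of the error terms R_3 := (1/χ_n)·(1/n)∑_i σ_i·(tanh(t_i*) − tanh((β w_i/E[W_n])·m̃_n^i + h)), R̄_3 := (1/χ_n)·(1/n)∑_i (tanh(t_i*) − tanh((β w_i/E[W_n])·m̃_n^i + h)), R_4 := (1/χ_n)·(1/n)∑_i tanh(t_i*)·(tanh(t_i*) − E_{μ_n}[σ_i]) and R̄_4 := (1/χ_n)·(1/n)∑_i (E_{μ_n}[σ_i] − tanh(t_i*)) satisfies the bound E_{μ_n}[|·|] ≤ (β·√χ̃_n/χ_n)·E_{μ_n}[|X̃_n|]·n^{−1/2} + (β/χ_n)·(E[W_n²]/E[W_n])·n^{−1}. -/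

import Mathlib

open Real BigOperators Finset MeasureTheory Filter ProbabilityTheory Topology

noncomputable section

namespace ICW

/-- The real spin value associated to a Boolean: `true ↦ 1`, `false ↦ -1`. -/
def spin (b : Bool) : ℝ := if b then 1 else -1

/-- `E[W_n^k] = (1/n) ∑_i w_i^k`. -/
def EWk (n : ℕ) (w : Fin n → ℝ) (k : ℕ) : ℝ := (1 / n : ℝ) * ∑ i, (w i) ^ k

/-- `E[W_n] = (1/n) ∑_i w_i`. -/
def EW (n : ℕ) (w : Fin n → ℝ) : ℝ := (1 / n : ℝ) * ∑ i, w i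

/-- The (negative) Hamiltonian of the inhomogeneous Curie–Weiss model. -/
def ham (n : ℕ) (w : Fin n → ℝ) (β h : ℝ) (σ : Fin n → Bool) : ℝ :=
  β / (2 * ∑ i, w i) * (∑ i, w i * spin (σ i)) ^ 2 + h * ∑ i, spin (σ i)

/-- Unnormalized Boltzmann–Gibbs weight. -/
def wt (n : ℕ) (w : Fin n → ℝ) (β h : ℝ) (σ : Fin n → Bool) : ℝ :=
  Real.exp (ham n w β h σ)

/-- Partition function `Z_n`. -/
def Z (n : ℕ) (w : Fin n → ℝ) (β h : ℝ) : ℝ := ∑ σ : Fin n → Bool, wt n w β h σ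

/-- Expectation under the ICW measure `μ_n`. -/
def icwE (n : ℕ) (w : Fin n → ℝ) (β h : ℝ) (f : (Fin n → Bool) → ℝ) : ℝ :=
  (∑ σ : Fin n → Bool, wt n w β h σ * f σ) / Z n w β h

open Classical in
/-- Probability of an event under the ICW measure `μ_n`. -/
def icwP (n : ℕ) (w : Fin n → ℝ) (β h : ℝ) (A : (Fin n → Bool) → Prop) : ℝ :=
  icwE n w β h (fun σ => if A σ then 1 else 0)

/-- Magnetization `m_n`. -/
def mn (n : ℕ) (σ : Fin n → Bool) : ℝ := (1 / n : ℝ) * ∑ i, spin (σ i)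

/-- Weighted magnetization `m̃_n`. -/
def mtil (n : ℕ) (w : Fin n → ℝ) (σ : Fin n → Bool) : ℝ :=
  (1 / n : ℝ) * ∑ i, w i * spin (σ i)

/-- Weighted magnetization leaving out spin `i`, `m̃_n^i`. -/
def mtilI (n : ℕ) (w : Fin n → ℝ) (σ : Fin n → Bool) (i : Fin n) : ℝ :=
  (1 / n : ℝ) * ∑ j ∈ Finset.univ.erase i, w j * spin (σ j)

/-- Argument `√(β/E[W_n])·w_i·x + h`. -/
def arg (n : ℕ) (w : Fin n → ℝ) (β h x : ℝ) (i : Fin n) : ℝ :=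
  Real.sqrt (β / EW n w) * w i * x + h

/-- `G_n(x)`. -/
def Gfun (n : ℕ) (w : Fin n → ℝ) (β h : ℝ) (x : ℝ) : ℝ :=
  x ^ 2 / 2 - (1 / n : ℝ) * ∑ i, Real.log (Real.cosh (arg n w β h x i))

/-- `G_n(x; s)` (with tilted argument `x+s`). -/
def GfunS (n : ℕ) (w : Fin n → ℝ) (β h : ℝ) (x s : ℝ) : ℝ :=
  x ^ 2 / 2 - (1 / n : ℝ) * ∑ i, Real.log (Real.cosh (arg n w β h (x + s) i))

/-- `G_n'(x)`. -/
def Gfun' (n : ℕ) (w : Fin n → ℝ) (β h : ℝ) (x : ℝ) : ℝ :=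
  x - (1 / n : ℝ) * ∑ i, Real.sqrt (β / EW n w) * w i * Real.tanh (arg n w β h x i)

/-- `G_n''(x)`. -/
def Gfun'' (n : ℕ) (w : Fin n → ℝ) (β h : ℝ) (x : ℝ) : ℝ :=
  1 - β / EW n w * ((1 / n : ℝ) * ∑ i, (1 - Real.tanh (arg n w β h x i) ^ 2) * (w i) ^ 2)

/-- `x` has the same sign as `h` (and is `0` when `h = 0`). -/
def SameSign (h x : ℝ) : Prop :=
  (0 < h ∧ 0 < x) ∨ (h < 0 ∧ x < 0) ∨ (h = 0 ∧ x = 0)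

/-- `M_n`, defined from a solution `x` of the fixed point equation. -/
def Mn (n : ℕ) (w : Fin n → ℝ) (β h x : ℝ) : ℝ :=
  (1 / n : ℝ) * ∑ i, Real.tanh (arg n w β h x i)

/-- The susceptibility `χ_n`, defined from a solution `x` of the fixed point equation. -/
def chiN (n : ℕ) (w : Fin n → ℝ) (β h x : ℝ) : ℝ :=
  1 - (1 / n : ℝ) * ∑ i, Real.tanh (arg n w β h x i) ^ 2
    + β / EW n w * ((1 / n : ℝ) * ∑ i, (1 - Real.tanh (arg n w β h x i) ^ 2) * w i) ^ 2
      / Gfun'' n w β h x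

/-- `M̃_n`. -/
def Mtil (n : ℕ) (w : Fin n → ℝ) (β x : ℝ) : ℝ := Real.sqrt (EW n w / β) * x

/-- `χ̃_n`. -/
def chiTil (n : ℕ) (w : Fin n → ℝ) (β h x : ℝ) : ℝ :=
  ((1 / n : ℝ) * ∑ i, (1 - Real.tanh (arg n w β h x i) ^ 2) * (w i) ^ 2) / Gfun'' n w β h x

/-- The normalized magnetization `X_n` (as a function of the configuration),
where `x` is the relevant solution of the fixed point equation. -/
def Xn (n : ℕ) (w : Fin n → ℝ) (β h x : ℝ) (σ : Fin n → Bool) : ℝ :=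
  Real.sqrt n * (mn n σ - Mn n w β h x) / Real.sqrt (chiN n w β h x)

/-- The normalized weighted magnetization `X̃_n`. -/
def Xtil (n : ℕ) (w : Fin n → ℝ) (β h x : ℝ) (σ : Fin n → Bool) : ℝ :=
  Real.sqrt n * (mtil n w σ - Mtil n w β x) / Real.sqrt (chiTil n w β h x)

/-- The standard normal cumulative distribution function. -/
def stdGaussCDF (z : ℝ) : ℝ := ((gaussianReal 0 1) (Set.Iic z)).toReal

/-- Kolmogorov distance between the law of `X` under `μ_n` and the standard normal law. -/
def dK (n : ℕ) (w : Fin n → ℝ) (β h : ℝ) (X : (Fin n → Bool) → ℝ) : ℝ :=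
  ⨆ z : ℝ, |icwP n w β h (fun σ => X σ ≤ z) - stdGaussCDF z|

/-- Weight regularity condition (i): the empirical weight distribution converges weakly to
the law `ν` of `W`, which is a probability measure with `E[W] > 0`. -/
def WeightRegI (w : (n : ℕ) → Fin n → ℝ) (ν : Measure ℝ) : Prop :=
  (∀ n i, 0 < w n i) ∧ IsProbabilityMeasure ν ∧
    (∀ f : BoundedContinuousFunction ℝ ℝ,
      Tendsto (fun n : ℕ => (1 / n : ℝ) * ∑ i, f (w n i)) atTop (𝓝 (∫ x, f x ∂ν))) ∧
    Integrable (fun x => x) ν ∧ 0 < ∫ x, x ∂ν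

/-- Weight regularity condition (ii): `E[W_n²] → E[W²] < ∞`. -/
def WeightRegII (w : (n : ℕ) → Fin n → ℝ) (ν : Measure ℝ) : Prop :=
  Integrable (fun x => x ^ 2) ν ∧
    Tendsto (fun n => EWk n (w n) 2) atTop (𝓝 (∫ x, x ^ 2 ∂ν))

/-- Weight regularity condition (iii): `E[W_n³] → E[W³] < ∞`. -/
def WeightRegIII (w : (n : ℕ) → Fin n → ℝ) (ν : Measure ℝ) : Prop :=
  Integrable (fun x => x ^ 3) ν ∧
    Tendsto (fun n => EWk n (w n) 3) atTop (𝓝 (∫ x, x ^ 3 ∂ν))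

/-- The critical inverse temperature `β_c = E[W]/E[W²]`. -/
def betaC (ν : Measure ℝ) : ℝ := (∫ x, x ∂ν) / (∫ x, x ^ 2 ∂ν)

/-- The uniqueness regime `U`. -/
def Uniq (ν : Measure ℝ) (β h : ℝ) : Prop :=
  (0 ≤ β ∧ h ≠ 0) ∨ (0 < β ∧ β < betaC ν ∧ h = 0)

/-- Probability that spin `i` equals `+1` given the remaining spins. -/
def pPlus (n : ℕ) (w : Fin n → ℝ) (β h : ℝ) (σ : Fin n → Bool) (i : Fin n) : ℝ :=
  wt n w β h (Function.update σ i true) /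
    (wt n w β h (Function.update σ i true) + wt n w β h (Function.update σ i false))

/-- Conditional expectation given `F_n` (the σ-algebra generated by `σ`) of a function of
`(σ, I, σ'_I)`, where `I` is uniform on `[n]` and `σ'_I` is resampled from the conditional
distribution of the `I`-th spin given the others. -/
def condAvg (n : ℕ) (w : Fin n → ℝ) (β h : ℝ)
    (f : (Fin n → Bool) → Fin n → Bool → ℝ) (σ : Fin n → Bool) : ℝ :=
  (1 / n : ℝ) * ∑ i, (pPlus n w β h σ i * f σ i true + (1 - pPlus n w β h σ i) * f σ i false)

/-- The increment `X_n − X'_n` as a function of `(σ, I, σ'_I)`. -/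
def XnD (n : ℕ) (w : Fin n → ℝ) (β h x : ℝ) (σ : Fin n → Bool) (i : Fin n) (b : Bool) : ℝ :=
  (spin (σ i) - spin b) / (Real.sqrt n * Real.sqrt (chiN n w β h x))

/-- The increment `X̃_n − X̃'_n` as a function of `(σ, I, σ'_I)`. -/
def XtilD (n : ℕ) (w : Fin n → ℝ) (β h x : ℝ) (σ : Fin n → Bool) (i : Fin n) (b : Bool) : ℝ :=
  w i * (spin (σ i) - spin b) / (Real.sqrt n * Real.sqrt (chiTil n w β h x))

/-- The constant `c` in the regression equation. -/
def cconst (n : ℕ) (w : Fin n → ℝ) (β h x : ℝ) : ℝ :=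
  Real.sqrt (chiTil n w β h x) / Real.sqrt (chiN n w β h x) * (β / EW n w) *
    ((1 / n : ℝ) * ∑ i, (1 - Real.tanh (arg n w β h x i) ^ 2) * w i)

end ICW

namespace ICW

/-- Error term `R_3`. -/
def R3 (n : ℕ) (w : Fin n → ℝ) (β h x : ℝ) (σ : Fin n → Bool) : ℝ :=
  1 / chiN n w β h x * ((1 / n : ℝ) * ∑ i, spin (σ i) *
    (Real.tanh (arg n w β h x i) - Real.tanh (β * w i / EW n w * mtilI n w σ i + h)))

/-- Error term `R̄_3`. -/
def Rbar3 (n : ℕ) (w : Fin n → ℝ) (β h x : ℝ) (σ : Fin n → Bool) : ℝ :=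
  1 / chiN n w β h x * ((1 / n : ℝ) * ∑ i,
    (Real.tanh (arg n w β h x i) - Real.tanh (β * w i / EW n w * mtilI n w σ i + h)))

/-- Error term `R_4`. -/
def R4 (n : ℕ) (w : Fin n → ℝ) (β h x : ℝ) : ℝ :=
  1 / chiN n w β h x * ((1 / n : ℝ) * ∑ i, Real.tanh (arg n w β h x i) *
    (Real.tanh (arg n w β h x i) - icwE n w β h (fun τ => spin (τ i))))

/-- Error term `R̄_4`. -/
def Rbar4 (n : ℕ) (w : Fin n → ℝ) (β h x : ℝ) : ℝ :=
  1 / chiN n w β h x * ((1 / n : ℝ) * ∑ i,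
    (icwE n w β h (fun τ => spin (τ i)) - Real.tanh (arg n w β h x i)))

/-! Each error term is an average over `i` of `tanh t_i* - tanh c_i`, where
`c_i = (β w_i / E[W_n]) m̃_n^i + h` is the cavity field of spin `i`, multiplied by factors of
modulus at most one; for `R_4` and `R̄_4` this uses `E[σ_i] = E[tanh c_i]`, which holds because
flipping `σ_i` multiplies the Gibbs weight by `exp (-2 σ_i c_i)`. As `tanh` is 1-Lipschitz and
`t_i* = (β w_i / E[W_n]) M̃_n + h`, each difference is at most
`(β w_i / E[W_n]) (|m̃_n - M̃_n| + w_i / n)`, whose average is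
`β |m̃_n - M̃_n| + β E[W_n²] / (E[W_n] n)`, and `|m̃_n - M̃_n| = √χ̃_n |X̃_n| / √n`. -/

end ICW

namespace Real

theorem hasDerivAt_tanh (x : ℝ) : HasDerivAt tanh (1 - tanh x ^ 2) x := by
  have hcosh := (cosh_pos x).ne'
  have h := (hasDerivAt_sinh x).div (hasDerivAt_cosh x) hcosh
  rw [show sinh / cosh = tanh from funext fun y => (tanh_eq_sinh_div_cosh y).symm] at h
  refine h.congr_deriv ?_
  rw [tanh_eq_sinh_div_cosh]
  field_simp

theorem lipschitzWith_one_tanh : LipschitzWith 1 tanh :=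
  lipschitzWith_of_nnnorm_deriv_le (fun x => (hasDerivAt_tanh x).differentiableAt) fun x => by
    rw [(hasDerivAt_tanh x).deriv, ← NNReal.coe_le_coe, coe_nnnorm, NNReal.coe_one, norm_eq_abs,
      abs_le]
    constructor <;> nlinarith [tanh_sq_lt_one x, sq_nonneg (tanh x)]

theorem abs_tanh_sub_tanh_le (a b : ℝ) : |tanh a - tanh b| ≤ |a - b| := by
  simpa [dist_eq] using lipschitzWith_one_tanh.dist_le_mul a b

theorem exp_two_mul_mul_one_sub_tanh (c : ℝ) : exp (2 * c) * (1 - tanh c) = 1 + tanh c := by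
  have hcosh := (cosh_pos c).ne'
  rw [tanh_eq_sinh_div_cosh, one_sub_div hcosh, one_add_div hcosh, cosh_sub_sinh, cosh_add_sinh,
    ← mul_div_assoc, ← exp_add]
  ring_nf

end Real

namespace ICW

lemma abs_spin (b : Bool) : |spin b| = 1 := by cases b <;> simp [spin]

lemma spin_not (b : Bool) : spin (!b) = -spin b := by cases b <;> simp [spin]

lemma spin_add_tanh (b : Bool) (c : ℝ) :
    spin b + tanh c = exp (2 * spin b * c) * (spin b - tanh c) := by
  have key := exp_two_mul_mul_one_sub_tanh c
  cases b
  · simp only [spin, Bool.false_eq_true, if_false]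
    rw [show 2 * -1 * c = -(2 * c) by ring, exp_neg]
    field_simp
    linear_combination -key
  · simp only [spin, if_true, mul_one]
    linear_combination -key

lemma abs_mul_avg_le {n : ℕ} {c : ℝ} (hc : 0 ≤ c) {u b : Fin n → ℝ} (hu : ∀ i, |u i| ≤ b i) :
    |c * ((1 / n : ℝ) * ∑ i, u i)| ≤ c * ((1 / n : ℝ) * ∑ i, b i) := by
  rw [abs_mul, abs_of_nonneg hc, abs_mul, abs_of_nonneg (by positivity)]
  gcongr
  exact (Finset.abs_sum_le_sum_abs _ _).trans (Finset.sum_le_sum fun i _ => hu i)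

section Expectation

variable (n : ℕ) (w : Fin n → ℝ) (β h : ℝ)

lemma Z_pos : 0 < Z n w β h :=
  Finset.sum_pos (fun _ _ => exp_pos _) Finset.univ_nonempty

lemma icwE_mono {f g : (Fin n → Bool) → ℝ} (hfg : ∀ σ, f σ ≤ g σ) :
    icwE n w β h f ≤ icwE n w β h g :=
  div_le_div_of_nonneg_right
    (Finset.sum_le_sum fun σ _ => mul_le_mul_of_nonneg_left (hfg σ) (exp_pos _).le)
    (Z_pos n w β h).le

lemma icwE_const (a : ℝ) : icwE n w β h (fun _ => a) = a := by
  rw [icwE, ← Finset.sum_mul, mul_div_right_comm, ← Z, div_self (Z_pos n w β h).ne', one_mul]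

lemma icwE_add (f g : (Fin n → Bool) → ℝ) :
    icwE n w β h (fun σ => f σ + g σ) = icwE n w β h f + icwE n w β h g := by
  simp only [icwE, mul_add, Finset.sum_add_distrib, add_div]

lemma icwE_sub (f g : (Fin n → Bool) → ℝ) :
    icwE n w β h (fun σ => f σ - g σ) = icwE n w β h f - icwE n w β h g := by
  simp only [icwE, mul_sub, Finset.sum_sub_distrib, sub_div]

lemma icwE_mul_left (c : ℝ) (f : (Fin n → Bool) → ℝ) :
    icwE n w β h (fun σ => c * f σ) = c * icwE n w β h f := by
  simp only [icwE, mul_left_comm _ c, ← Finset.mul_sum, mul_div_assoc]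

lemma icwE_sum {ι : Type*} (s : Finset ι) (f : ι → (Fin n → Bool) → ℝ) :
    icwE n w β h (fun σ => ∑ i ∈ s, f i σ) = ∑ i ∈ s, icwE n w β h (f i) := by
  simp only [icwE, Finset.mul_sum, ← Finset.sum_div]
  rw [Finset.sum_comm]

lemma abs_icwE_le (f : (Fin n → Bool) → ℝ) :
    |icwE n w β h f| ≤ icwE n w β h (fun σ => |f σ|) := by
  rw [icwE, abs_div, abs_of_pos (Z_pos n w β h)]
  refine div_le_div_of_nonneg_right ((Finset.abs_sum_le_sum_abs _ _).trans_eq ?_)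
    (Z_pos n w β h).le
  simp only [abs_mul, abs_of_pos (exp_pos _), wt]

end Expectation

section SpinFlip

variable (n : ℕ) (w : Fin n → ℝ) (β h : ℝ)

lemma sum_erase_update_self {M : Type*} [AddCommMonoid M] (σ : Fin n → Bool) (i : Fin n)
    (b : Bool) (f : Fin n → Bool → M) :
    ∑ j ∈ Finset.univ.erase i, f j (Function.update σ i b j)
      = ∑ j ∈ Finset.univ.erase i, f j (σ j) :=
  Finset.sum_congr rfl fun j hj => by rw [Function.update_of_ne (Finset.ne_of_mem_erase hj)]

lemma ham_eq_ham_update_not_add (σ : Fin n → Bool) (i : Fin n) :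
    ham n w β h σ = ham n w β h (Function.update σ i (!σ i))
      + 2 * spin (σ i) * (β * w i / EW n w * mtilI n w σ i + h) := by
  have split (τ : Fin n → Bool) (f : Fin n → Bool → ℝ) :
      ∑ j, f j (τ j) = f i (τ i) + ∑ j ∈ Finset.univ.erase i, f j (τ j) :=
    (Finset.add_sum_erase _ _ (Finset.mem_univ i)).symm
  have hn : (n : ℝ) ≠ 0 := Nat.cast_ne_zero.mpr (Fin.pos i).ne'
  unfold ham mtilI EW
  rw [split σ fun j b => w j * spin b, split σ fun _ b => spin b,
    split (Function.update σ i (!σ i)) fun j b => w j * spin b,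
    split (Function.update σ i (!σ i)) fun _ b => spin b,
    sum_erase_update_self n σ i _ fun j b => w j * spin b,
    sum_erase_update_self n σ i _ fun _ b => spin b]
  simp only [Function.update_self, spin_not]
  rcases eq_or_ne (∑ j, w j) 0 with hℓ | hℓ
  · simp only [hℓ, mul_zero, div_zero, zero_mul]
    ring
  · field_simp
    ring

lemma mtilI_update_self (σ : Fin n → Bool) (i : Fin n) (b : Bool) :
    mtilI n w (Function.update σ i b) i = mtilI n w σ i := by
  unfold mtilI
  rw [sum_erase_update_self n σ i b fun j b => w j * spin b]

theorem icwE_spin_eq_icwE_tanh (i : Fin n) :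
    icwE n w β h (fun σ => spin (σ i))
      = icwE n w β h (fun σ => tanh (β * w i / EW n w * mtilI n w σ i + h)) := by
  set c := fun σ => β * w i / EW n w * mtilI n w σ i + h
  -- `spin_add_tanh` makes the summands at `σ` and at its flip cancel.
  have hflip : ∑ σ, wt n w β h σ * (spin (σ i) - tanh (c σ)) = 0 := by
    refine Finset.sum_ninvolution (fun σ => Function.update σ i (!σ i)) (fun σ => ?_)
      (fun σ _ hσ => by simpa using congrFun hσ i) (fun _ => Finset.mem_univ _)
      (fun σ => by simp)
    have hc : c (Function.update σ i (!σ i)) = c σ := by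
      simp only [c, mtilI_update_self]
    rw [hc, Function.update_self, spin_not, wt, ham_eq_ham_update_not_add n w β h σ i, exp_add,
      ← wt, mul_assoc, ← spin_add_tanh]
    ring
  unfold icwE
  rw [← sub_eq_zero, ← sub_div, ← Finset.sum_sub_distrib, div_eq_zero_iff]
  simp only [← mul_sub]
  exact Or.inl hflip

end SpinFlip

section MeanField

variable {n : ℕ} {w : Fin n → ℝ} {β h x : ℝ}

lemma EW_pos (hn : 0 < n) (hw : ∀ i, 0 < w i) : 0 < EW n w :=
  have : Nonempty (Fin n) := Fin.pos_iff_nonempty.mp hn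
  mul_pos (by positivity) (Finset.sum_pos (fun i _ => hw i) Finset.univ_nonempty)

lemma chiTil_pos (hn : 0 < n) (hw : ∀ i, 0 < w i) (hG'' : 0 < Gfun'' n w β h x) :
    0 < chiTil n w β h x := by
  have : Nonempty (Fin n) := Fin.pos_iff_nonempty.mp hn
  refine div_pos (mul_pos (by positivity) (Finset.sum_pos (fun i _ => ?_) Finset.univ_nonempty))
    hG''
  exact mul_pos (sub_pos.mpr (tanh_sq_lt_one _)) (pow_pos (hw i) 2)

lemma chiN_pos (hn : 0 < n) (hβ : 0 ≤ β) (hEW : 0 ≤ EW n w) (hG'' : 0 < Gfun'' n w β h x) :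
    0 < chiN n w β h x := by
  have : Nonempty (Fin n) := Fin.pos_iff_nonempty.mp hn
  have havg : (1 / n : ℝ) * ∑ i, tanh (arg n w β h x i) ^ 2 < 1 := by
    calc (1 / n : ℝ) * ∑ i, tanh (arg n w β h x i) ^ 2 < (1 / n : ℝ) * ∑ _i : Fin n, 1 :=
          mul_lt_mul_of_pos_left (Finset.sum_lt_sum_of_nonempty Finset.univ_nonempty
            fun i _ => tanh_sq_lt_one _) (by positivity)
      _ = 1 := by simp [hn.ne']
  have hcorr : 0 ≤ β / EW n w *
      ((1 / n : ℝ) * ∑ i, (1 - tanh (arg n w β h x i) ^ 2) * w i) ^ 2 / Gfun'' n w β h x := by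
    positivity
  unfold chiN
  linarith

lemma arg_eq_mul_Mtil_add (hβ : 0 < β) (hEW : 0 < EW n w) (i : Fin n) :
    arg n w β h x i = β * w i / EW n w * Mtil n w β x + h := by
  have hsqrt : √(β / EW n w) = β / EW n w * √(EW n w / β) := by
    have hq : 0 < β / EW n w := div_pos hβ hEW
    rw [show EW n w / β = (β / EW n w)⁻¹ from (inv_div _ _).symm, sqrt_inv,
      eq_mul_inv_iff_mul_eq₀ (sqrt_pos.mpr hq).ne', ← sq, sq_sqrt hq.le]
  rw [arg, Mtil, hsqrt]
  ring

lemma abs_Mtil_sub_mtilI_le (σ : Fin n → Bool) (i : Fin n) (hwi : 0 ≤ w i) :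
    |Mtil n w β x - mtilI n w σ i| ≤ |mtil n w σ - Mtil n w β x| + w i / n := by
  have hsplit : mtil n w σ = mtilI n w σ i + w i * spin (σ i) / n := by
    rw [mtil, mtilI, ← Finset.add_sum_erase _ _ (Finset.mem_univ i)]
    ring
  calc |Mtil n w β x - mtilI n w σ i|
      = |-(mtil n w σ - Mtil n w β x) + w i * spin (σ i) / n| := by rw [hsplit]; ring_nf
    _ ≤ |mtil n w σ - Mtil n w β x| + w i / n := by
      refine (abs_add_le _ _).trans_eq ?_
      rw [abs_neg, abs_div, abs_mul, abs_spin, mul_one, abs_of_nonneg hwi, Nat.abs_cast]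

lemma abs_mtil_sub_Mtil (hn : 0 < n) (hχ : 0 < chiTil n w β h x) (σ : Fin n → Bool) :
    |mtil n w σ - Mtil n w β x| = √(chiTil n w β h x) / √n * |Xtil n w β h x σ| := by
  have hsn : 0 < √(n : ℝ) := sqrt_pos.mpr (Nat.cast_pos.mpr hn)
  rw [Xtil, abs_div, abs_mul, abs_of_pos hsn, abs_of_pos (sqrt_pos.mpr hχ)]
  field_simp

end MeanField

/-- Bound on the distance between `t_i*` and the cavity field `(β w_i / E[W_n]) m̃_n^i + h`. -/
def cavityFieldBound (n : ℕ) (w : Fin n → ℝ) (β x : ℝ) (σ : Fin n → Bool) (i : Fin n) : ℝ :=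
  β * w i / EW n w * (|mtil n w σ - Mtil n w β x| + w i / n)

section CavityField

variable {n : ℕ} {w : Fin n → ℝ} {β : ℝ} (h x : ℝ)

lemma abs_tanh_arg_sub_tanh_le (hβ : 0 < β) (hEW : 0 < EW n w) (σ : Fin n → Bool) (i : Fin n)
    (hwi : 0 ≤ w i) :
    |tanh (arg n w β h x i) - tanh (β * w i / EW n w * mtilI n w σ i + h)|
      ≤ cavityFieldBound n w β x σ i := by
  have hcoef : 0 ≤ β * w i / EW n w := by positivity
  calc |tanh (arg n w β h x i) - tanh (β * w i / EW n w * mtilI n w σ i + h)|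
      ≤ |arg n w β h x i - (β * w i / EW n w * mtilI n w σ i + h)| := abs_tanh_sub_tanh_le _ _
    _ = β * w i / EW n w * |Mtil n w β x - mtilI n w σ i| := by
      rw [arg_eq_mul_Mtil_add hβ hEW, ← abs_of_nonneg hcoef, ← abs_mul, abs_of_nonneg hcoef]
      ring_nf
    _ ≤ cavityFieldBound n w β x σ i :=
      mul_le_mul_of_nonneg_left (abs_Mtil_sub_mtilI_le σ i hwi) hcoef

lemma abs_tanh_arg_sub_icwE_spin_le (hβ : 0 < β) (hEW : 0 < EW n w) (i : Fin n) (hwi : 0 ≤ w i) :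
    |tanh (arg n w β h x i) - icwE n w β h (fun σ => spin (σ i))|
      ≤ icwE n w β h (fun σ => cavityFieldBound n w β x σ i) := by
  rw [icwE_spin_eq_icwE_tanh, ← icwE_const n w β h (tanh (arg n w β h x i)), ← icwE_sub]
  exact (abs_icwE_le n w β h _).trans
    (icwE_mono n w β h fun σ => abs_tanh_arg_sub_tanh_le h x hβ hEW σ i hwi)

lemma avg_cavityFieldBound (hn : 0 < n) (hEW : 0 < EW n w) (σ : Fin n → Bool) :
    (1 / n : ℝ) * ∑ i, cavityFieldBound n w β x σ i
      = β * |mtil n w σ - Mtil n w β x| + β * (EWk n w 2 / EW n w) / n := by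
  have hn' : (n : ℝ) ≠ 0 := Nat.cast_ne_zero.mpr hn.ne'
  have hsum : ∑ i, w i = n * EW n w := by rw [EW]; field_simp
  have hsum2 : ∑ i, w i ^ 2 = n * EWk n w 2 := by rw [EWk]; field_simp
  have hterm : ∀ i, cavityFieldBound n w β x σ i
      = β * |mtil n w σ - Mtil n w β x| / EW n w * w i + β / (EW n w * n) * w i ^ 2 := by
    intro i
    rw [cavityFieldBound]
    ring
  simp only [hterm, Finset.sum_add_distrib, ← Finset.mul_sum, hsum, hsum2]
  field_simp

lemma icwE_avg_cavityFieldBound (hn : 0 < n) (hEW : 0 < EW n w)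
    (hχ : 0 < chiTil n w β h x) :
    icwE n w β h (fun σ => (1 / n : ℝ) * ∑ i, cavityFieldBound n w β x σ i)
      = β * √(chiTil n w β h x) * icwE n w β h (fun σ => |Xtil n w β h x σ|) / √n
        + β * (EWk n w 2 / EW n w) / n := by
  simp only [avg_cavityFieldBound x hn hEW, abs_mtil_sub_Mtil hn hχ, icwE_add, icwE_mul_left,
    icwE_const]
  ring

end CavityField

theorem R3_R4_bounds_general (n : ℕ) (hn : 0 < n) (w : Fin n → ℝ) (hw : ∀ i, 0 < w i)
    (β h : ℝ) (hβ : 0 < β) (x : ℝ) (hG'' : 0 < Gfun'' n w β h x) :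
    icwE n w β h (fun σ => |R3 n w β h x σ|)
        ≤ β * Real.sqrt (chiTil n w β h x) / chiN n w β h x *
            icwE n w β h (fun σ => |Xtil n w β h x σ|) / Real.sqrt n
          + β / chiN n w β h x * (EWk n w 2 / EW n w) / n ∧
    icwE n w β h (fun σ => |Rbar3 n w β h x σ|)
        ≤ β * Real.sqrt (chiTil n w β h x) / chiN n w β h x *
            icwE n w β h (fun σ => |Xtil n w β h x σ|) / Real.sqrt n
          + β / chiN n w β h x * (EWk n w 2 / EW n w) / n ∧
    icwE n w β h (fun _ => |R4 n w β h x|)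
        ≤ β * Real.sqrt (chiTil n w β h x) / chiN n w β h x *
            icwE n w β h (fun σ => |Xtil n w β h x σ|) / Real.sqrt n
          + β / chiN n w β h x * (EWk n w 2 / EW n w) / n ∧
    icwE n w β h (fun _ => |Rbar4 n w β h x|)
        ≤ β * Real.sqrt (chiTil n w β h x) / chiN n w β h x *
            icwE n w β h (fun σ => |Xtil n w β h x σ|) / Real.sqrt n
          + β / chiN n w β h x * (EWk n w 2 / EW n w) / n := by
  have hEW := EW_pos hn hw
  have hχinv := one_div_nonneg.mpr (chiN_pos hn hβ.le hEW.le hG'').le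
  set B := icwE n w β h fun σ => (1 / n : ℝ) * ∑ i, cavityFieldBound n w β x σ i with hBdef
  have hB : icwE n w β h (fun σ => 1 / chiN n w β h x *
      ((1 / n : ℝ) * ∑ i, cavityFieldBound n w β x σ i)) = 1 / chiN n w β h x * B :=
    icwE_mul_left ..
  have hB' : 1 / chiN n w β h x * ((1 / n : ℝ) * ∑ i,
      icwE n w β h (fun σ => cavityFieldBound n w β x σ i)) = 1 / chiN n w β h x * B := by
    rw [← icwE_sum, ← icwE_mul_left]
  have hRHS : β * √(chiTil n w β h x) / chiN n w β h x *
      icwE n w β h (fun σ => |Xtil n w β h x σ|) / √n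
        + β / chiN n w β h x * (EWk n w 2 / EW n w) / n = 1 / chiN n w β h x * B := by
    rw [hBdef, icwE_avg_cavityFieldBound h x hn hEW (chiTil_pos hn hw hG'')]
    ring
  simp only [hRHS, icwE_const]
  refine ⟨?_, ?_, ?_, ?_⟩
  · refine (icwE_mono n w β h fun σ => abs_mul_avg_le hχinv fun i => ?_).trans_eq hB
    rw [abs_mul, abs_spin, one_mul]
    exact abs_tanh_arg_sub_tanh_le h x hβ hEW σ i (hw i).le
  · exact (icwE_mono n w β h fun σ => abs_mul_avg_le hχinv fun i =>
      abs_tanh_arg_sub_tanh_le h x hβ hEW σ i (hw i).le).trans_eq hB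
  · refine (abs_mul_avg_le hχinv fun i => ?_).trans_eq hB'
    rw [abs_mul]
    exact (mul_le_of_le_one_left (abs_nonneg _) (abs_tanh_lt_one _).le).trans
      (abs_tanh_arg_sub_icwE_spin_le h x hβ hEW i (hw i).le)
  · refine (abs_mul_avg_le hχinv fun i => ?_).trans_eq hB'
    rw [abs_sub_comm]
    exact abs_tanh_arg_sub_icwE_spin_le h x hβ hEW i (hw i).le

/-- **Bounds on the error terms `R_3`, `R̄_3`, `R_4`, `R̄_4`**: each has expected absolute
value at most `(β·√χ̃_n/χ_n)·E[|X̃_n|]·n^{−1/2} + (β/χ_n)·(E[W_n²]/E[W_n])·n^{−1}`. -/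
theorem R3_R4_bounds (n : ℕ) (hn : 0 < n) (w : Fin n → ℝ) (hw : ∀ i, 0 < w i)
    (β h : ℝ) (hβ : 0 < β) (x : ℝ) (hx : Gfun' n w β h x = 0) (hsign : SameSign h x)
    (hG'' : 0 < Gfun'' n w β h x) :
    icwE n w β h (fun σ => |R3 n w β h x σ|)
        ≤ β * Real.sqrt (chiTil n w β h x) / chiN n w β h x *
            icwE n w β h (fun σ => |Xtil n w β h x σ|) / Real.sqrt n
          + β / chiN n w β h x * (EWk n w 2 / EW n w) / n ∧
    icwE n w β h (fun σ => |Rbar3 n w β h x σ|)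
        ≤ β * Real.sqrt (chiTil n w β h x) / chiN n w β h x *
            icwE n w β h (fun σ => |Xtil n w β h x σ|) / Real.sqrt n
          + β / chiN n w β h x * (EWk n w 2 / EW n w) / n ∧
    icwE n w β h (fun _ => |R4 n w β h x|)
        ≤ β * Real.sqrt (chiTil n w β h x) / chiN n w β h x *
            icwE n w β h (fun σ => |Xtil n w β h x σ|) / Real.sqrt n
          + β / chiN n w β h x * (EWk n w 2 / EW n w) / n ∧
    icwE n w β h (fun _ => |Rbar4 n w β h x|)
        ≤ β * Real.sqrt (chiTil n w β h x) / chiN n w β h x *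
            icwE n w β h (fun σ => |Xtil n w β h x σ|) / Real.sqrt n
          + β / chiN n w β h x * (EWk n w 2 / EW n w) / n :=
  R3_R4_bounds_general n hn w hw β h hβ x hG''

end ICW
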